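/- Let H(z,w) ∈ ℂ[z,w] be a homogeneous polynomial of degree m ≥ 2 with H(1,0) ≠ 0, and assume H is not a scalar multiple of the m-th power of a linear form. Define R : ℂ → ℝ by R(u) = 2·|Δ_H(u,1)|² / (|H_z(u,1)|² + |H_w(u,1)|²)³ if (H_z(u,1), H_w(u,1)) ≠ (0,0), and R(u) = 0 otherwise. Then: (1) if (H_z(u,1), H_w(u,1)) = (0,0) then H(u,1) = 0; (2) R is continuous on all of ℂ and R(u) ≥ 0 for all u; (3) R(u) = 0 whenever H(u,1) = 0; (4) R(u) → 0 as |u| → ∞; (5) R attains a positive absolute maximum on ℂ. -/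

import Mathlib

/-!
Put `h(u) = H(u,1)`. Euler's identity turns the data of `R` into data of `h`:
`H_z(u,1) = h'`, `H_w(u,1) = m h − u h'` and `Δ_H(u,1) = m h ((m−1) h'² − m h h'')`.
If `r` is a root of `h` of multiplicity `n + 1`, then `H_z(·,1)` vanishes at `r` to order exactly
`n` while `Δ_H(·,1)` vanishes to order at least `3n + 1`, so `R(u) = O(|u − r|²)` near `r`;
at every other point the gradient is nonzero and `R` is a quotient of continuous functions.
The two-variable expression `R̃(z,w)` with `R(u) = R̃(u,1)` is homogeneous of degree `−2`, so
`R(u) = |u|⁻² R̃(1, 1/u) → 0` at infinity, `H_z(1,0) = m H(1,0)` being nonzero.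
Finally `Δ_H(·,1) ≢ 0`: if `(m−1) h'² = m h h''`, comparing lowest-order terms at a root of
multiplicity `k` gives `k (m − k) = 0`, so `h = c (u − r)^m` and `H` would be a power of a linear
form. Hence `R` is positive somewhere, and a continuous function vanishing at infinity attains
its maximum.
-/

open MvPolynomial

/-- `Δ_H = 2 H_z H_w H_zw − H_zz H_w² − H_z² H_ww` of a binary form. -/
noncomputable def deltaH (H : MvPolynomial (Fin 2) ℂ) : MvPolynomial (Fin 2) ℂ :=
  2 * pderiv (0 : Fin 2) H * pderiv (1 : Fin 2) H
      * pderiv (1 : Fin 2) (pderiv (0 : Fin 2) H)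
    - pderiv (0 : Fin 2) (pderiv (0 : Fin 2) H) * (pderiv (1 : Fin 2) H) ^ 2
    - (pderiv (0 : Fin 2) H) ^ 2 * pderiv (1 : Fin 2) (pderiv (1 : Fin 2) H)

namespace MvPolynomial

section CommSemiring

variable {R σ : Type*} [CommSemiring R] {φ : MvPolynomial σ R} {n : ℕ}

theorem IsHomogeneous.eval_smul (hφ : φ.IsHomogeneous n) (c : R) (x : σ → R) :
    eval (c • x) φ = c ^ n * eval x φ := by
  rw [φ.as_sum, map_sum, map_sum, Finset.mul_sum]
  refine Finset.sum_congr rfl fun s hs => ?_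
  simp only [eval_monomial, Pi.smul_apply, smul_eq_mul, mul_pow, Finsupp.prod_mul]
  rw [hφ.degree_eq_sum_deg_support hs, Finsupp.prod, Finset.prod_pow_eq_pow_sum]
  ring

theorem IsHomogeneous.sum_mul_eval_pderiv [Fintype σ] (hφ : φ.IsHomogeneous n) (x : σ → R) :
    ∑ i, x i * eval x (pderiv i φ) = n * eval x φ := by
  simpa [nsmul_eq_mul] using congrArg (eval x) hφ.sum_X_mul_pderiv

end CommSemiring

theorem IsHomogeneous.eval_eq_zero_of_eval_pderiv_eq_zero {R σ : Type*} [CommRing R] [IsDomain R]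
    [CharZero R] [Fintype σ] {φ : MvPolynomial σ R} {n : ℕ} (hφ : φ.IsHomogeneous n)
    (hn : n ≠ 0) {x : σ → R} (h : ∀ i, eval x (pderiv i φ) = 0) : eval x φ = 0 := by
  have hEuler := hφ.sum_mul_eval_pderiv x
  simp only [h, mul_zero, Finset.sum_const_zero] at hEuler
  exact (mul_eq_zero.mp hEuler.symm).resolve_left (Nat.cast_ne_zero.mpr hn)

end MvPolynomial

section Dehomogenization

variable {R : Type*} [CommSemiring R]

noncomputable def dehom : MvPolynomial (Fin 2) R →ₐ[R] Polynomial R :=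
  aeval ![Polynomial.X, 1]

theorem eval_dehom (P : MvPolynomial (Fin 2) R) (u : R) :
    (dehom P).eval u = eval ![u, 1] P := by
  have hpt : (fun i => Polynomial.aeval u ((![Polynomial.X, 1] : Fin 2 → Polynomial R) i))
      = ![u, 1] := by
    funext i; fin_cases i <;> simp
  rw [dehom, ← Polynomial.coe_aeval_eq_eval, ← AlgHom.comp_apply, comp_aeval, hpt, aeval_eq_eval]

theorem dehom_X_zero : dehom (X 0 : MvPolynomial (Fin 2) R) = Polynomial.X := by simp [dehom]

theorem dehom_X_one : dehom (X 1 : MvPolynomial (Fin 2) R) = 1 := by simp [dehom]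

theorem dehom_pderiv_zero (P : MvPolynomial (Fin 2) R) :
    dehom (pderiv 0 P) = Polynomial.derivative (dehom P) := by
  induction P using MvPolynomial.induction_on with
  | C a => simp [dehom]
  | add p q hp hq => simp [hp, hq]
  | mul_X p i hp =>
    fin_cases i
    · simp only [dehom, Fin.isValue, Fin.zero_eta, Derivation.leibniz, pderiv_X, Pi.single_eq_same,
        smul_eq_mul, mul_one, map_add, map_mul, aeval_X, Matrix.cons_val_zero,
        Polynomial.derivative_mul, Polynomial.derivative_X] at hp ⊢
      rw [hp]; ring
    · simpa [dehom, pderiv_X] using hp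

theorem MvPolynomial.IsHomogeneous.natDegree_dehom_le {P : MvPolynomial (Fin 2) R} {n : ℕ}
    (hP : P.IsHomogeneous n) : (dehom P).natDegree ≤ n := by
  rw [P.as_sum, map_sum]
  refine Polynomial.natDegree_sum_le_of_forall_le _ _ fun s hs => ?_
  have hs' : s 0 + s 1 = n := by
    have := hP.degree_eq_sum_deg_support hs
    rwa [← Finsupp.degree_apply, Finsupp.degree_eq_sum, Fin.sum_univ_two, eq_comm] at this
  rw [dehom, aeval_monomial, Finsupp.prod_fintype _ _ (by simp), Fin.prod_univ_two]
  simp only [Matrix.cons_val_zero, Matrix.cons_val_one, one_pow, mul_one, Polynomial.algebraMap_eq]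
  exact (Polynomial.natDegree_C_mul_le _ _).trans ((Polynomial.natDegree_X_pow_le _).trans (by omega))

end Dehomogenization

theorem dehom_pderiv_one {R : Type*} [CommRing R] {P : MvPolynomial (Fin 2) R} {n : ℕ}
    (hP : P.IsHomogeneous n) :
    dehom (pderiv 1 P)
      = (n : Polynomial R) * dehom P - Polynomial.X * Polynomial.derivative (dehom P) := by
  have hEuler := congrArg dehom hP.sum_X_mul_pderiv
  simp only [Fin.sum_univ_two, map_add, map_mul, dehom_X_zero, dehom_pderiv_zero, dehom_X_one,
    one_mul, nsmul_eq_mul, map_natCast] at hEuler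
  linear_combination hEuler

namespace MvPolynomial.IsHomogeneous

variable {K : Type*} [Field K] {P Q : MvPolynomial (Fin 2) K} {n : ℕ}

theorem eval_eq_pow_mul_eval_dehom (hP : P.IsHomogeneous n) {x : Fin 2 → K} (hx : x 1 ≠ 0) :
    eval x P = x 1 ^ n * (dehom P).eval (x 0 / x 1) := by
  have hx' : x = x 1 • ![x 0 / x 1, 1] := by
    funext i; fin_cases i <;> simp [mul_div_cancel₀ _ hx]
  rw [eval_dehom, ← hP.eval_smul, ← hx']

theorem eq_of_dehom_eq [Infinite K] (hP : P.IsHomogeneous n) (hQ : Q.IsHomogeneous n)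
    (h : dehom P = dehom Q) : P = Q := by
  have hX : (P - Q) * X 1 = 0 := MvPolynomial.funext fun x => by
    by_cases hx : x 1 = 0
    · simp [hx]
    · simp [hP.eval_eq_pow_mul_eval_dehom hx, hQ.eval_eq_pow_mul_eval_dehom hx, h]
  exact sub_eq_zero.mp ((mul_eq_zero.mp hX).resolve_right (X_ne_zero 1))

end MvPolynomial.IsHomogeneous

namespace Polynomial

section CommRing

variable {R : Type*} [CommRing R]

/-- For a binary form `H` of degree `m`, `(m − 1) • hessianFactor m (dehom H)` is `−Hess_H(u,1)`,
where `Hess_H = H_zz H_ww − H_zw²`. -/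
noncomputable def hessianFactor (m : ℕ) (p : R[X]) : R[X] :=
  C ((m : R) - 1) * derivative p ^ 2 - C (m : R) * p * derivative (derivative p)

theorem derivative_X_sub_C_pow_succ_mul (r : R) (n : ℕ) (g : R[X]) :
    derivative ((X - C r) ^ (n + 1) * g)
      = (X - C r) ^ n * (C ((n : R) + 1) * g + (X - C r) * derivative g) := by
  simp only [derivative_mul, derivative_X_sub_C_pow, map_add, map_natCast, map_one]
  push_cast
  ring

theorem hessianFactor_X_sub_C_pow_succ_mul (m : ℕ) (r : R) (n : ℕ) (g : R[X]) :
    hessianFactor m ((X - C r) ^ (n + 1) * g)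
      = (X - C r) ^ (2 * n) * (C (((n : R) + 1) * ((m : R) - n - 1)) * g ^ 2
          - 2 * C ((n : R) + 1) * (X - C r) * g * derivative g
          + (X - C r) ^ 2 * hessianFactor m g) := by
  rcases n with _ | n
  · simp only [hessianFactor, map_sub, map_natCast, map_one, zero_add, pow_one, derivative_mul,
      derivative_X, derivative_C, sub_zero, one_mul, derivative_add, mul_zero,
      pow_zero, Nat.cast_zero, mul_one]
    ring
  · simp only [hessianFactor, map_sub, map_natCast, map_one, derivative_mul, derivative_X_sub_C_pow,
      Nat.cast_add, Nat.cast_one, map_add, add_tsub_cancel_right, derivative_natCast,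
      derivative_one, add_zero, zero_mul, zero_add, map_mul]
    ring

theorem exists_eq_X_sub_C_pow_succ_mul {p : R[X]} (hp : p ≠ 0) {r : R} (hr : p.IsRoot r) :
    ∃ (n : ℕ) (g : R[X]), p = (X - C r) ^ (n + 1) * g ∧ g.eval r ≠ 0 := by
  obtain ⟨g, hpg, hg⟩ := p.exists_eq_pow_rootMultiplicity_mul_and_not_dvd hp r
  obtain ⟨n, hn⟩ := Nat.exists_eq_add_of_lt ((rootMultiplicity_pos hp).mpr hr)
  exact ⟨n, g, by rwa [hn, zero_add] at hpg, fun h => hg (dvd_iff_isRoot.mpr h)⟩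

end CommRing

theorem exists_eq_C_mul_linear_pow_of_hessianFactor_eq_zero {K : Type*} [Field K]
    [IsAlgClosed K] [CharZero K] {m : ℕ} {p : K[X]} (hdeg : p.natDegree ≤ m)
    (hW : hessianFactor m p = 0) : ∃ c a b : K, p = C c * (C a * X + C b) ^ m := by
  by_cases hp : p.natDegree = 0
  · refine ⟨p.coeff 0, 0, 1, ?_⟩
    conv_lhs => rw [eq_C_of_natDegree_eq_zero hp]
    simp
  have hp0 : p ≠ 0 := by rintro rfl; simp at hp
  obtain ⟨r, hr⟩ := IsAlgClosed.exists_root p (by rwa [degree_eq_natDegree hp0, Nat.cast_ne_zero])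
  obtain ⟨n, g, rfl, hg⟩ := exists_eq_X_sub_C_pow_succ_mul hp0 hr
  rw [hessianFactor_X_sub_C_pow_succ_mul] at hW
  have hB := congrArg (eval r)
    ((mul_eq_zero.mp hW).resolve_left (pow_ne_zero _ (X_sub_C_ne_zero r)))
  simp only [eval_add, eval_sub, eval_mul, eval_C, eval_pow, eval_X, sub_self, zero_mul,
    mul_zero, sub_zero] at hB
  have hnm : n + 1 = m := by
    have : (m : K) - n - 1 = 0 := by simpa [hg, Nat.cast_add_one_ne_zero] using hB
    exact_mod_cast (by push_cast; linear_combination -this : ((n + 1 : ℕ) : K) = m)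
  have hg0 : g ≠ 0 := by rintro rfl; simp at hg
  rw [natDegree_mul (pow_ne_zero _ (X_sub_C_ne_zero r)) hg0, natDegree_pow, natDegree_X_sub_C,
    mul_one, hnm] at hdeg
  refine ⟨g.coeff 0, 1, -r, ?_⟩
  rw [eq_C_of_natDegree_eq_zero (by omega : g.natDegree = 0), hnm]
  simp only [coeff_C_zero, map_one, one_mul, map_neg, ← sub_eq_add_neg, mul_comm]

end Polynomial

theorem MvPolynomial.IsHomogeneous.deltaH {H : MvPolynomial (Fin 2) ℂ} {m : ℕ}
    (hH : H.IsHomogeneous m) (hm : 2 ≤ m) : (deltaH H).IsHomogeneous (3 * m - 4) := by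
  obtain ⟨k, rfl⟩ := Nat.exists_eq_add_of_le' hm
  have h₀ : (pderiv 0 H).IsHomogeneous (k + 1) := hH.pderiv
  have h₁ : (pderiv 1 H).IsHomogeneous (k + 1) := hH.pderiv
  have h₂ : (2 : MvPolynomial (Fin 2) ℂ).IsHomogeneous 0 := isHomogeneous_C _ 2
  have hA := ((h₂.mul h₀).mul h₁).mul (h₀.pderiv (i := 1))
  have hB := (h₀.pderiv (i := 0)).mul (h₁.pow 2)
  have hC := (h₀.pow 2).mul (h₁.pderiv (i := 1))
  rw [show 0 + (k + 1) + (k + 1) + (k + 1 - 1) = 3 * (k + 2) - 4 by omega] at hA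
  rw [show k + 1 - 1 + (k + 1) * 2 = 3 * (k + 2) - 4 by omega] at hB
  rw [show (k + 1) * 2 + (k + 1 - 1) = 3 * (k + 2) - 4 by omega] at hC
  exact (hA.sub hB).sub hC

theorem dehom_deltaH {H : MvPolynomial (Fin 2) ℂ} {m : ℕ} (hH : H.IsHomogeneous m) (hm : 1 ≤ m) :
    dehom (deltaH H)
      = Polynomial.C (m : ℂ) * (dehom H * Polynomial.hessianFactor m (dehom H)) := by
  have e₀₁ := dehom_pderiv_one (hH.pderiv (i := 0))
  have e₁₁ := dehom_pderiv_one (hH.pderiv (i := 1))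
  rw [dehom_pderiv_zero, Nat.cast_sub hm] at e₀₁
  rw [dehom_pderiv_one hH, Nat.cast_sub hm] at e₁₁
  simp only [deltaH, map_sub, map_mul, map_pow, map_ofNat, e₀₁, e₁₁, dehom_pderiv_zero,
    dehom_pderiv_one hH, Polynomial.hessianFactor, Polynomial.derivative_mul,
    Polynomial.derivative_natCast, Polynomial.derivative_X, map_natCast, map_one]
  ring

theorem sq_norm_add_sq_norm_pos {E : Type*} [NormedAddCommGroup E] {a b : E}
    (h : ¬(a = 0 ∧ b = 0)) : 0 < ‖a‖ ^ 2 + ‖b‖ ^ 2 := by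
  rcases not_and_or.mp h with h | h
  · have := norm_pos_iff.mpr h; positivity
  · have := norm_pos_iff.mpr h; positivity

theorem tendsto_norm_pow_mul_sq_div_norm_pow_mul_pow_six {𝕜 : Type*} [NormedField 𝕜]
    {f g : 𝕜 → 𝕜} {r : 𝕜} (hf : ContinuousAt f r) (hg : ContinuousAt g r) (hgr : g r ≠ 0)
    (n : ℕ) :
    Filter.Tendsto (fun u => ‖(u - r) ^ (3 * n + 1) * f u‖ ^ 2 / ‖(u - r) ^ n * g u‖ ^ 6)
      (nhds r) (nhds 0) := by
  have hcont : ContinuousAt (fun u => ‖u - r‖ ^ 2 * (‖f u‖ ^ 2 / ‖g u‖ ^ 6)) r :=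
    ((continuous_id.sub continuous_const).norm.pow 2).continuousAt.mul
      ((hf.norm.pow 2).div (hg.norm.pow 6) (by positivity))
  have hval : ‖r - r‖ ^ 2 * (‖f r‖ ^ 2 / ‖g r‖ ^ 6) = 0 := by simp
  refine (hval ▸ hcont.tendsto).congr fun u => ?_
  rcases eq_or_ne u r with rfl | hu
  · simp
  have hu' : ‖u - r‖ ^ (6 * n) ≠ 0 := pow_ne_zero _ (norm_ne_zero_iff.mpr (sub_ne_zero.mpr hu))
  calc ‖u - r‖ ^ 2 * (‖f u‖ ^ 2 / ‖g u‖ ^ 6)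
      = ‖u - r‖ ^ (6 * n) * (‖u - r‖ ^ 2 * ‖f u‖ ^ 2) / (‖u - r‖ ^ (6 * n) * ‖g u‖ ^ 6) := by
        rw [mul_div_mul_left _ _ hu', mul_div_assoc]
    _ = _ := by simp only [norm_mul, norm_pow]; ring

/-- `R(u) = curvature H ![u, 1]`; where the gradient vanishes, division by zero makes this `0`,
as in the definition of `R`. -/
noncomputable def curvature (H : MvPolynomial (Fin 2) ℂ) (x : Fin 2 → ℂ) : ℝ :=
  2 * ‖eval x (deltaH H)‖ ^ 2 / (‖eval x (pderiv 0 H)‖ ^ 2 + ‖eval x (pderiv 1 H)‖ ^ 2) ^ 3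

section Curvature

variable {H : MvPolynomial (Fin 2) ℂ} {m : ℕ}

theorem curvature_nonneg (H : MvPolynomial (Fin 2) ℂ) (x : Fin 2 → ℂ) : 0 ≤ curvature H x := by
  unfold curvature; positivity

theorem curvature_pos {x : Fin 2 → ℂ} (hΔ : eval x (deltaH H) ≠ 0)
    (hx : ¬(eval x (pderiv 0 H) = 0 ∧ eval x (pderiv 1 H) = 0)) : 0 < curvature H x := by
  have := norm_pos_iff.mpr hΔ
  have := sq_norm_add_sq_norm_pos hx
  unfold curvature
  positivity

theorem continuousAt_curvature {x : Fin 2 → ℂ}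
    (hx : ¬(eval x (pderiv 0 H) = 0 ∧ eval x (pderiv 1 H) = 0)) :
    ContinuousAt (curvature H) x :=
  ((continuous_const.mul ((continuous_eval _).norm.pow 2)).continuousAt.div
    ((((continuous_eval _).norm.pow 2).add ((continuous_eval _).norm.pow 2)).pow 3).continuousAt
    (pow_pos (sq_norm_add_sq_norm_pos hx) 3).ne')

theorem curvature_le_div_norm_eval_pderiv_zero_pow_six {x : Fin 2 → ℂ}
    (h : eval x (pderiv 0 H) = 0 → eval x (deltaH H) = 0) :
    curvature H x ≤ 2 * ‖eval x (deltaH H)‖ ^ 2 / ‖eval x (pderiv 0 H)‖ ^ 6 := by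
  by_cases h₀ : eval x (pderiv 0 H) = 0
  · simp [curvature, h h₀]
  have := norm_pos_iff.mpr h₀
  rw [curvature, show 6 = 2 * 3 from rfl, pow_mul]
  gcongr
  exact le_add_of_nonneg_right (sq_nonneg _)

theorem curvature_smul (hH : H.IsHomogeneous m) (hm : 2 ≤ m) {c : ℂ} (hc : c ≠ 0)
    (x : Fin 2 → ℂ) : curvature H (c • x) = curvature H x / ‖c‖ ^ 2 := by
  obtain ⟨k, rfl⟩ := Nat.exists_eq_add_of_le' hm
  simp only [curvature, (hH.deltaH hm).eval_smul, (hH.pderiv (i := 0)).eval_smul,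
    (hH.pderiv (i := 1)).eval_smul, norm_mul, norm_pow,
    show 3 * (k + 2) - 4 = 3 * k + 2 by omega, show k + 2 - 1 = k + 1 by omega]
  rcases eq_or_ne (‖eval x (pderiv 0 H)‖ ^ 2 + ‖eval x (pderiv 1 H)‖ ^ 2) 0 with h | h
  · simp only [mul_pow]
    rw [← mul_add, h]
    simp
  field_simp
  ring

theorem tendsto_curvature_cocompact (hH : H.IsHomogeneous m) (hm : 2 ≤ m)
    (h₁₀ : eval ![1, 0] (pderiv 0 H) ≠ 0) :
    Filter.Tendsto (fun u : ℂ => curvature H ![u, 1]) (Filter.cocompact ℂ) (nhds 0) := by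
  have hinv : Filter.Tendsto (fun u : ℂ => ![1, u⁻¹]) (Filter.cocompact ℂ) (nhds ![1, 0]) := by
    rw [← Metric.cobounded_eq_cocompact]
    exact tendsto_const_nhds.matrixVecCons
      ((Filter.tendsto_inv₀_cobounded (α := ℂ)).matrixVecCons tendsto_const_nhds)
  have hlim := ((continuousAt_curvature (H := H) fun h => h₁₀ h.1).tendsto.comp hinv).div_atTop
    ((Filter.tendsto_pow_atTop two_ne_zero).comp tendsto_norm_cocompact_atTop)
  refine hlim.congr' ?_
  filter_upwards [(isCompact_singleton (x := (0 : ℂ))).compl_mem_cocompact] with u (hu : u ≠ 0)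
  have hvec : ![u, 1] = u • ![1, u⁻¹] := by
    funext i; fin_cases i <;> simp [mul_inv_cancel₀ hu]
  simp only [Function.comp_apply, hvec, curvature_smul hH hm hu]

theorem exists_eval_pderiv_zero_and_eval_deltaH_eq_pow_mul (hH : H.IsHomogeneous m) (hm : 1 ≤ m)
    (h₀ : dehom H ≠ 0) {r : ℂ} (hr : eval ![r, 1] H = 0) :
    ∃ (n : ℕ) (g₁ E : Polynomial ℂ), g₁.eval r ≠ 0 ∧
      (∀ u, eval ![u, 1] (pderiv 0 H) = (u - r) ^ n * g₁.eval u) ∧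
      ∀ u, eval ![u, 1] (deltaH H) = (u - r) ^ (3 * n + 1) * E.eval u := by
  obtain ⟨n, g, hg, hgr⟩ :=
    Polynomial.exists_eq_X_sub_C_pow_succ_mul h₀ (by rwa [Polynomial.IsRoot, eval_dehom])
  set t : Polynomial ℂ := Polynomial.X - Polynomial.C r
  refine ⟨n, Polynomial.C ((n : ℂ) + 1) * g + t * Polynomial.derivative g,
    Polynomial.C (m : ℂ) * g * (Polynomial.C (((n : ℂ) + 1) * ((m : ℂ) - n - 1)) * g ^ 2
      - 2 * Polynomial.C ((n : ℂ) + 1) * t * g * Polynomial.derivative g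
      + t ^ 2 * Polynomial.hessianFactor m g), ?_, fun u => ?_, fun u => ?_⟩
  · simp [t, Nat.cast_add_one_ne_zero n, hgr]
  · rw [← eval_dehom, dehom_pderiv_zero, hg, Polynomial.derivative_X_sub_C_pow_succ_mul]
    simp [t]
  · rw [← eval_dehom, dehom_deltaH hH hm, hg, Polynomial.hessianFactor_X_sub_C_pow_succ_mul]
    simp only [t, Polynomial.eval_mul, Polynomial.eval_pow, Polynomial.eval_sub,
      Polynomial.eval_X, Polynomial.eval_C]
    ring

theorem tendsto_curvature_nhds_of_eval_eq_zero (hH : H.IsHomogeneous m) (hm : 1 ≤ m) {r : ℂ}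
    (hr : eval ![r, 1] H = 0) :
    Filter.Tendsto (fun u : ℂ => curvature H ![u, 1]) (nhds r) (nhds 0) := by
  by_cases h₀ : dehom H = 0
  · have hzero : ∀ u, curvature H ![u, 1] = 0 := fun u => by
      simp [curvature, ← eval_dehom, dehom_deltaH hH hm, h₀]
    simp only [hzero, tendsto_const_nhds]
  obtain ⟨n, g₁, E, hg₁, e₀, eΔ⟩ :=
    exists_eval_pderiv_zero_and_eval_deltaH_eq_pow_mul hH hm h₀ hr
  have hlim : Filter.Tendsto
      (fun u => 2 * ‖(u - r) ^ (3 * n + 1) * E.eval u‖ ^ 2 / ‖(u - r) ^ n * g₁.eval u‖ ^ 6)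
      (nhds r) (nhds 0) := by
    simpa only [mul_div_assoc, mul_zero] using (tendsto_norm_pow_mul_sq_div_norm_pow_mul_pow_six
      E.continuousAt g₁.continuousAt hg₁ n).const_mul 2
  refine tendsto_of_tendsto_of_tendsto_of_le_of_le' tendsto_const_nhds hlim
    (Filter.Eventually.of_forall fun u => curvature_nonneg _ _) ?_
  filter_upwards [g₁.continuousAt.eventually_ne hg₁] with u hu
  rw [← e₀, ← eΔ]
  refine curvature_le_div_norm_eval_pderiv_zero_pow_six fun h => ?_
  rw [e₀, mul_eq_zero, or_iff_left hu] at h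
  rw [eΔ, pow_succ, pow_mul', h]
  simp

theorem curvature_eq_zero_of_eval_eq_zero (hH : H.IsHomogeneous m) (hm : 1 ≤ m) {u : ℂ}
    (hu : eval ![u, 1] H = 0) : curvature H ![u, 1] = 0 := by
  have hΔ : eval ![u, 1] (deltaH H) = 0 := by
    rw [← eval_dehom, dehom_deltaH hH hm]
    simp [eval_dehom, hu]
  simp [curvature, hΔ]

theorem continuous_curvature_affine (hH : H.IsHomogeneous m) (hm : 1 ≤ m) :
    Continuous fun u : ℂ => curvature H ![u, 1] := by
  refine continuous_iff_continuousAt.mpr fun u => ?_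
  by_cases hcrit : eval ![u, 1] (pderiv 0 H) = 0 ∧ eval ![u, 1] (pderiv 1 H) = 0
  · have hu : eval ![u, 1] H = 0 := hH.eval_eq_zero_of_eval_pderiv_eq_zero (by omega)
      (Fin.forall_fin_two.mpr hcrit)
    have := tendsto_curvature_nhds_of_eval_eq_zero hH hm hu
    rwa [← curvature_eq_zero_of_eval_eq_zero hH hm hu] at this
  · exact ContinuousAt.comp (f := fun u : ℂ => ![u, 1]) (continuousAt_curvature hcrit)
      (continuous_id.matrixVecCons continuous_const).continuousAt

theorem dehom_deltaH_ne_zero (hH : H.IsHomogeneous m) (hm : 1 ≤ m)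
    (hH' : ¬∃ c a b : ℂ, H = C c * (C a * X (0 : Fin 2) + C b * X (1 : Fin 2)) ^ m) :
    dehom (deltaH H) ≠ 0 := by
  intro hΔ
  have hW : Polynomial.hessianFactor m (dehom H) = 0 := by
    rw [dehom_deltaH hH hm, mul_eq_zero, or_iff_right (by simp; omega), mul_eq_zero] at hΔ
    rcases hΔ with h₀ | hW
    · simp [h₀, Polynomial.hessianFactor]
    · exact hW
  obtain ⟨c, a, b, hcab⟩ :=
    Polynomial.exists_eq_C_mul_linear_pow_of_hessianFactor_eq_zero hH.natDegree_dehom_le hW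
  refine hH' ⟨c, a, b, hH.eq_of_dehom_eq ?_ ?_⟩
  · simpa only [one_mul] using
      (((isHomogeneous_C_mul_X a 0).add (isHomogeneous_C_mul_X b 1)).pow m).C_mul c
  · rw [hcab]
    simp [dehom, Polynomial.algebraMap_eq]

theorem exists_curvature_pos (hH : H.IsHomogeneous m) (hm : 1 ≤ m)
    (hH' : ¬∃ c a b : ℂ, H = C c * (C a * X (0 : Fin 2) + C b * X (1 : Fin 2)) ^ m) :
    ∃ u : ℂ, 0 < curvature H ![u, 1] := by
  obtain ⟨u, hu⟩ : ∃ u, (dehom (deltaH H)).eval u ≠ 0 := by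
    by_contra! h
    exact dehom_deltaH_ne_zero hH hm hH' (Polynomial.funext fun u => by simp [h u])
  rw [eval_dehom] at hu
  refine ⟨u, curvature_pos hu fun hcrit => hu ?_⟩
  have h₀ := hH.eval_eq_zero_of_eval_pderiv_eq_zero (by omega) (Fin.forall_fin_two.mpr hcrit)
  rw [← eval_dehom, dehom_deltaH hH hm]
  simp [eval_dehom, h₀]

end Curvature

/-- let `H` be a binary form of degree `m ≥ 2` with `H(1,0) ≠ 0`,
not a scalar multiple of the `m`-th power of a linear form.  Let
`R(u) = 2|Δ_H(u,1)|²/(|H_z(u,1)|²+|H_w(u,1)|²)³` where the gradient is nonzero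
and `R(u) = 0` otherwise.  Then: (1) the gradient vanishes at `u` only if
`H(u,1) = 0`; (2) `R` is continuous and nonnegative; (3) `R(u) = 0` whenever
`H(u,1) = 0`; (4) `R(u) → 0` as `|u| → ∞`; (5) `R` attains a positive absolute
maximum. -/
theorem stmt10 (m : ℕ) (hm : 2 ≤ m) (H : MvPolynomial (Fin 2) ℂ)
    (hH : H.IsHomogeneous m)
    (hH10 : eval ![1, 0] H ≠ 0)
    (hnp : ¬ ∃ c a b : ℂ,
      H = C c * (C a * X (0 : Fin 2) + C b * X (1 : Fin 2)) ^ m)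
    (R : ℂ → ℝ)
    (hR : ∀ u : ℂ,
      R u =
        if eval ![u, 1] (pderiv (0 : Fin 2) H) = 0 ∧
           eval ![u, 1] (pderiv (1 : Fin 2) H) = 0 then 0
        else
          2 * ‖eval ![u, 1] (deltaH H)‖ ^ 2 /
            (‖eval ![u, 1] (pderiv (0 : Fin 2) H)‖ ^ 2 +
              ‖eval ![u, 1] (pderiv (1 : Fin 2) H)‖ ^ 2) ^ 3) :
    (∀ u : ℂ,
        eval ![u, 1] (pderiv (0 : Fin 2) H) = 0 →
        eval ![u, 1] (pderiv (1 : Fin 2) H) = 0 →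
        eval ![u, 1] H = 0) ∧
    (Continuous R ∧ ∀ u, 0 ≤ R u) ∧
    (∀ u : ℂ, eval ![u, 1] H = 0 → R u = 0) ∧
    Filter.Tendsto R (Filter.cocompact ℂ) (nhds 0) ∧
    (∃ u₀ : ℂ, 0 < R u₀ ∧ ∀ u, R u ≤ R u₀) := by
  have hm₁ : 1 ≤ m := by omega
  obtain rfl : R = fun u => curvature H ![u, 1] := funext fun u => by
    rw [hR u, curvature]
    split_ifs with hcrit
    · simp [hcrit.1, hcrit.2]
    · rfl
  have h10 : eval ![1, 0] (pderiv 0 H) ≠ 0 := by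
    have hEuler := hH.sum_mul_eval_pderiv ![1, 0]
    simp only [Fin.sum_univ_two, Matrix.cons_val_zero, Matrix.cons_val_one, one_mul, zero_mul,
      add_zero] at hEuler
    rw [hEuler]
    exact mul_ne_zero (Nat.cast_ne_zero.mpr (by omega)) hH10
  have hcont := continuous_curvature_affine hH hm₁
  have hlim := tendsto_curvature_cocompact hH hm h10
  obtain ⟨u₁, hu₁⟩ := exists_curvature_pos hH hm₁ hnp
  obtain ⟨u₀, hu₀⟩ :=
    hcont.exists_forall_ge' u₁ ((hlim.eventually_lt_const hu₁).mono fun _ => le_of_lt)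
  refine ⟨fun u h₀ h₁ => ?_, ⟨hcont, fun u => curvature_nonneg H _⟩,
    fun u => curvature_eq_zero_of_eval_eq_zero hH hm₁, hlim, u₀, hu₁.trans_le (hu₀ u₁), hu₀⟩
  exact hH.eval_eq_zero_of_eval_pderiv_eq_zero (by omega) (Fin.forall_fin_two.mpr ⟨h₀, h₁⟩)
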